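/- arXiv:2603.22081 — 6 statements merged into one kernel-verified Lean document; each statement's English description precedes it below -/
import Mathlib

section
/- Let 0 < ξ < ε ≪ 1 and d ≤ 1, and let (U₁, U₂) be an (ε, d)-regular pair in a graph G (i.e., for all Xᵢ ⊆ Uᵢ with |Xᵢ| ≥ ε|Uᵢ|, the density d(X₁,X₂) satisfies |d(X₁,X₂) − d| < ε). If V₁ ⊇ U₁ and V₂ ⊇ U₂ are disjoint sets with |Vᵢ \ Uᵢ| ≤ ξ|Uᵢ| for i = 1,2, then the pair (V₁, V₂) is (ε', d')-regular, where ε' = max{ξ/ε, 6ε} and d' is some real with |d' − d| < 3ε. -/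
open Finset

/-- Number of edges of `G` between `X` and `Y` (ordered pairs with one endpoint in each). -/
def edgesBetween {V : Type*} [DecidableEq V] (G : SimpleGraph V) [DecidableRel G.Adj]
    (X Y : Finset V) : ℕ :=
  ((X ×ˢ Y).filter fun p => G.Adj p.1 p.2).card

/-- The density of the pair `(X, Y)` in `G`. -/
noncomputable def density {V : Type*} [DecidableEq V] (G : SimpleGraph V) [DecidableRel G.Adj]
    (X Y : Finset V) : ℝ :=
  (edgesBetween G X Y : ℝ) / ((X.card : ℝ) * (Y.card : ℝ))

/-- `(U₁, U₂)` is an `(ε, d)`-regular pair in `G`. -/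
def IsRegularPair {V : Type*} [DecidableEq V] (G : SimpleGraph V) [DecidableRel G.Adj]
    (ε d : ℝ) (U₁ U₂ : Finset V) : Prop :=
  ∀ X₁ ⊆ U₁, ∀ X₂ ⊆ U₂, ε * (U₁.card : ℝ) ≤ (X₁.card : ℝ) →
    ε * (U₂.card : ℝ) ≤ (X₂.card : ℝ) → |density G X₁ X₂ - d| < ε

private lemma eb_mono {V : Type*} [DecidableEq V] (G : SimpleGraph V) [DecidableRel G.Adj]
    {X₁ X₂ Y₁ Y₂ : Finset V} (h1 : Y₁ ⊆ X₁) (h2 : Y₂ ⊆ X₂) :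
    edgesBetween G Y₁ Y₂ ≤ edgesBetween G X₁ X₂ :=
  card_le_card (filter_subset_filter _ (product_subset_product h1 h2))

private lemma eb_le {V : Type*} [DecidableEq V] (G : SimpleGraph V) [DecidableRel G.Adj]
    (X Y : Finset V) : edgesBetween G X Y ≤ X.card * Y.card :=
  (card_filter_le _ _).trans (card_product _ _).le

private lemma eb_split {V : Type*} [DecidableEq V] (G : SimpleGraph V) [DecidableRel G.Adj]
    {X₁ X₂ Y₁ Y₂ : Finset V} (h1 : Y₁ ⊆ X₁) (h2 : Y₂ ⊆ X₂) :
    edgesBetween G X₁ X₂ ≤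
      edgesBetween G Y₁ Y₂ + (X₁ \ Y₁).card * X₂.card + X₁.card * (X₂ \ Y₂).card := by
  have hsub : X₁ ×ˢ X₂ ⊆ (Y₁ ×ˢ Y₂) ∪ ((X₁ \ Y₁) ×ˢ X₂) ∪ (X₁ ×ˢ (X₂ \ Y₂)) := by
    intro p hp
    simp only [mem_product, mem_union, mem_sdiff] at *
    by_cases hy1 : p.1 ∈ Y₁ <;> by_cases hy2 : p.2 ∈ Y₂ <;> tauto
  have h := card_le_card (filter_subset_filter (fun p => G.Adj p.1 p.2) hsub)
  rw [filter_union, filter_union] at h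
  refine h.trans ?_
  refine le_trans (card_union_le _ _) ?_
  refine add_le_add (le_trans (card_union_le _ _) (add_le_add le_rfl ?_)) ?_
  · exact (card_filter_le _ _).trans (card_product _ _).le
  · exact (card_filter_le _ _).trans (card_product _ _).le

theorem stmt_0 {V : Type*} [DecidableEq V] (G : SimpleGraph V) [DecidableRel G.Adj]
    (ξ ε d : ℝ) (hξ : 0 < ξ) (hξε : ξ < ε) (hε1 : ε < 1) (hd : d ≤ 1)
    (U₁ U₂ V₁ V₂ : Finset V)
    (hreg : IsRegularPair G ε d U₁ U₂)
    (hU₁ : U₁ ⊆ V₁) (hU₂ : U₂ ⊆ V₂) (hdisj : Disjoint V₁ V₂)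
    (h₁ : ((V₁ \ U₁).card : ℝ) ≤ ξ * (U₁.card : ℝ))
    (h₂ : ((V₂ \ U₂).card : ℝ) ≤ ξ * (U₂.card : ℝ)) :
    ∃ d' : ℝ, |d' - d| < 3 * ε ∧ IsRegularPair G (max (ξ / ε) (6 * ε)) d' V₁ V₂ := by
  have hε : 0 < ε := hξ.trans hξε
  refine ⟨d, by simp only [sub_self, abs_zero]; positivity, ?_⟩
  intro X₁ hX₁ X₂ hX₂ hc₁ hc₂
  set ε' : ℝ := max (ξ / ε) (6 * ε) with hε'def
  have hε'6 : 6 * ε ≤ ε' := le_max_right _ _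
  have hε'0 : 0 < ε' := lt_of_lt_of_le (by linarith) hε'6
  have hξεε' : ξ ≤ ε' * ε := (div_le_iff₀ hε).1 (le_max_left _ _)
  set Y₁ : Finset V := X₁ ∩ U₁ with hY₁def
  set Y₂ : Finset V := X₂ ∩ U₂ with hY₂def
  -- cardinalities as reals
  have hUV₁ : (U₁.card : ℝ) ≤ V₁.card := Nat.cast_le.2 (card_le_card hU₁)
  have hUV₂ : (U₂.card : ℝ) ≤ V₂.card := Nat.cast_le.2 (card_le_card hU₂)
  have hXU₁ : (X₁.card : ℝ) ≤ Y₁.card + (V₁ \ U₁).card := by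
    have hsub : X₁ ⊆ Y₁ ∪ (V₁ \ U₁) := by
      intro x hx
      have hxV : x ∈ V₁ := hX₁ hx
      simp only [hY₁def, mem_union, mem_inter, mem_sdiff]
      tauto
    have := (card_le_card hsub).trans (card_union_le _ _)
    exact_mod_cast this
  have hXU₂ : (X₂.card : ℝ) ≤ Y₂.card + (V₂ \ U₂).card := by
    have hsub : X₂ ⊆ Y₂ ∪ (V₂ \ U₂) := by
      intro x hx
      have hxV : x ∈ V₂ := hX₂ hx
      simp only [hY₂def, mem_union, mem_inter, mem_sdiff]
      tauto
    have := (card_le_card hsub).trans (card_union_le _ _)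
    exact_mod_cast this
  have hX₁U : (ε' : ℝ) * U₁.card ≤ X₁.card :=
    le_trans (mul_le_mul_of_nonneg_left hUV₁ hε'0.le) hc₁
  have hX₂U : (ε' : ℝ) * U₂.card ≤ X₂.card :=
    le_trans (mul_le_mul_of_nonneg_left hUV₂ hε'0.le) hc₂
  have hU₁0 : (0:ℝ) ≤ U₁.card := Nat.cast_nonneg _
  have hU₂0 : (0:ℝ) ≤ U₂.card := Nat.cast_nonneg _
  -- ξ * |Uᵢ| ≤ ε * |Xᵢ|
  have hξX₁ : ξ * U₁.card ≤ ε * X₁.card := by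
    have p1 := mul_le_mul_of_nonneg_right hξεε' hU₁0
    have p2 := mul_le_mul_of_nonneg_left hX₁U hε.le
    linarith
  have hξX₂ : ξ * U₂.card ≤ ε * X₂.card := by
    have p1 := mul_le_mul_of_nonneg_right hξεε' hU₂0
    have p2 := mul_le_mul_of_nonneg_left hX₂U hε.le
    linarith
  -- |Yᵢ| ≥ ε |Uᵢ| and |Yᵢ| ≥ (1-ε)|Xᵢ|
  have hY₁big : ε * U₁.card ≤ Y₁.card := by
    have p1 := mul_le_mul_of_nonneg_right hε'6 hU₁0
    have p2 := mul_le_mul_of_nonneg_right hξε.le hU₁0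
    linarith
  have hY₂big : ε * U₂.card ≤ Y₂.card := by
    have p1 := mul_le_mul_of_nonneg_right hε'6 hU₂0
    have p2 := mul_le_mul_of_nonneg_right hξε.le hU₂0
    linarith
  have hY₁X : (1 - ε) * X₁.card ≤ Y₁.card := by linarith
  have hY₂X : (1 - ε) * X₂.card ≤ Y₂.card := by linarith
  have hYd := hreg Y₁ inter_subset_right Y₂ inter_subset_right hY₁big hY₂big
  -- goal is an abs bound; reduce to two inequalities after cases on emptiness
  by_cases hX₁e : X₁ = ∅
  · have hY₁e : Y₁ = ∅ := by rw [hY₁def, hX₁e, empty_inter]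
    have hz1 : density G X₁ X₂ = 0 := by simp [density, edgesBetween, hX₁e]
    have hz2 : density G Y₁ Y₂ = 0 := by simp [density, edgesBetween, hY₁e]
    rw [hz2] at hYd
    rw [hz1]
    exact hYd.trans_le (by linarith)
  by_cases hX₂e : X₂ = ∅
  · have hY₂e : Y₂ = ∅ := by rw [hY₂def, hX₂e, empty_inter]
    have hz1 : density G X₁ X₂ = 0 := by simp [density, edgesBetween, hX₂e]
    have hz2 : density G Y₁ Y₂ = 0 := by simp [density, edgesBetween, hY₂e]
    rw [hz2] at hYd
    rw [hz1]
    exact hYd.trans_le (by linarith)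
  -- now both nonempty
  have ha₁ : (0:ℝ) < X₁.card := by
    exact_mod_cast Nat.pos_of_ne_zero (fun h => hX₁e (card_eq_zero.1 h))
  have ha₂ : (0:ℝ) < X₂.card := by
    exact_mod_cast Nat.pos_of_ne_zero (fun h => hX₂e (card_eq_zero.1 h))
  have hb₁ : (0:ℝ) < Y₁.card := lt_of_lt_of_le (mul_pos (by linarith) ha₁) hY₁X
  have hb₂ : (0:ℝ) < Y₂.card := lt_of_lt_of_le (mul_pos (by linarith) ha₂) hY₂X
  have hbX₁ : (Y₁.card:ℝ) ≤ X₁.card := Nat.cast_le.2 (card_le_card inter_subset_left)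
  have hbX₂ : (Y₂.card:ℝ) ≤ X₂.card := Nat.cast_le.2 (card_le_card inter_subset_left)
  -- unfold density in hYd, extract edge count bounds
  rw [density, abs_lt] at hYd
  obtain ⟨hYl, hYr⟩ := hYd
  have hbb : (0:ℝ) < (Y₁.card:ℝ) * Y₂.card := mul_pos hb₁ hb₂
  have haa : (0:ℝ) < (X₁.card:ℝ) * X₂.card := mul_pos ha₁ ha₂
  have heYup : ((edgesBetween G Y₁ Y₂ : ℝ)) < (d + ε) * ((Y₁.card:ℝ) * Y₂.card) := by
    have := (div_lt_iff₀ hbb).1 (by linarith : (edgesBetween G Y₁ Y₂ : ℝ) / ((Y₁.card:ℝ) * Y₂.card) < d + ε)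
    linarith
  have heYlo : (d - ε) * ((Y₁.card:ℝ) * Y₂.card) < (edgesBetween G Y₁ Y₂ : ℝ) := by
    have := (lt_div_iff₀ hbb).1 (by linarith : d - ε < (edgesBetween G Y₁ Y₂ : ℝ) / ((Y₁.card:ℝ) * Y₂.card))
    linarith
  have hdε : 0 < d + ε := by
    have h0 : (0:ℝ) ≤ (edgesBetween G Y₁ Y₂ : ℝ) / ((Y₁.card:ℝ) * Y₂.card) :=
      div_nonneg (Nat.cast_nonneg _) hbb.le
    linarith
  -- edge comparison between (X₁,X₂) and (Y₁,Y₂)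
  have hemono : ((edgesBetween G Y₁ Y₂ : ℝ)) ≤ edgesBetween G X₁ X₂ :=
    Nat.cast_le.2 (eb_mono G inter_subset_left inter_subset_left)
  have hd₁ : ((X₁ \ Y₁).card : ℝ) ≤ ε * X₁.card := by
    have hsub : X₁ \ Y₁ ⊆ V₁ \ U₁ := by
      intro x hx
      simp only [mem_sdiff, hY₁def, mem_inter] at hx ⊢
      exact ⟨hX₁ hx.1, fun h => hx.2 ⟨hx.1, h⟩⟩
    have : ((X₁ \ Y₁).card:ℝ) ≤ ((V₁ \ U₁).card:ℝ) := Nat.cast_le.2 (card_le_card hsub)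
    linarith
  have hd₂ : ((X₂ \ Y₂).card : ℝ) ≤ ε * X₂.card := by
    have hsub : X₂ \ Y₂ ⊆ V₂ \ U₂ := by
      intro x hx
      simp only [mem_sdiff, hY₂def, mem_inter] at hx ⊢
      exact ⟨hX₂ hx.1, fun h => hx.2 ⟨hx.1, h⟩⟩
    have : ((X₂ \ Y₂).card:ℝ) ≤ ((V₂ \ U₂).card:ℝ) := Nat.cast_le.2 (card_le_card hsub)
    linarith
  have hesplit : ((edgesBetween G X₁ X₂ : ℝ)) ≤
      (edgesBetween G Y₁ Y₂ : ℝ) + (X₁ \ Y₁).card * X₂.card + X₁.card * (X₂ \ Y₂).card := by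
    exact_mod_cast eb_split G inter_subset_left inter_subset_left
  have heup : ((edgesBetween G X₁ X₂ : ℝ)) ≤
      (edgesBetween G Y₁ Y₂ : ℝ) + 2 * ε * (X₁.card * X₂.card) := by
    have p1 := mul_le_mul_of_nonneg_right hd₁ ha₂.le
    have p2 := mul_le_mul_of_nonneg_left hd₂ ha₁.le
    linarith
  have hlo : (d - ε') * ((X₁.card:ℝ) * X₂.card) < (edgesBetween G X₁ X₂ : ℝ) := by
    rcases le_or_gt d ε with hcase | hcase
    · have h0 : (0:ℝ) ≤ (edgesBetween G X₁ X₂ : ℝ) := Nat.cast_nonneg _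
      have p1 : (d - ε') * ((X₁.card:ℝ) * X₂.card) < 0 :=
        mul_neg_of_neg_of_pos (by linarith) haa
      linarith
    · -- e > (d-ε)(1-ε)² a₁ a₂ ≥ (d - 3ε) a₁a₂ > (d-ε')a₁a₂
      have hpos : (0:ℝ) < d - ε := by linarith
      have h1 : (1 - ε) * (X₁.card:ℝ) * ((1 - ε) * X₂.card) ≤ (Y₁.card:ℝ) * Y₂.card := by
        have e1 : (0:ℝ) ≤ (1 - ε) * X₁.card := mul_nonneg (by linarith) ha₁.le
        exact mul_le_mul hY₁X hY₂X (mul_nonneg (by linarith) ha₂.le) hb₁.le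
      have key : (d - ε) * ((1 - ε) * X₁.card * ((1 - ε) * X₂.card)) ≤
          (d - ε) * ((Y₁.card:ℝ) * Y₂.card) := mul_le_mul_of_nonneg_left h1 hpos.le
      have t1 : (0:ℝ) ≤ 2 * ε * (1 - d) := by
        have := mul_nonneg (by linarith : (0:ℝ) ≤ 2 * ε) (by linarith : (0:ℝ) ≤ 1 - d)
        linarith
      have t2 : (0:ℝ) ≤ ε ^ 2 * (d + 2 - ε) := by
        have := mul_nonneg (sq_nonneg ε) (by linarith : (0:ℝ) ≤ d + 2 - ε)
        linarith
      have expand : (d - ε) * (1 - ε) ^ 2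
          = d - 3 * ε + (2 * ε * (1 - d) + ε ^ 2 * (d + 2 - ε)) := by ring
      have hscal : d - ε' < (d - ε) * (1 - ε) ^ 2 := by rw [expand]; linarith
      have p2 : (d - ε') * ((X₁.card:ℝ) * X₂.card)
          < ((d - ε) * (1 - ε) ^ 2) * ((X₁.card:ℝ) * X₂.card) :=
        mul_lt_mul_of_pos_right hscal haa
      have p3 : ((d - ε) * (1 - ε) ^ 2) * ((X₁.card:ℝ) * X₂.card)
          = (d - ε) * ((1 - ε) * X₁.card * ((1 - ε) * X₂.card)) := by ring
      linarith
  have hup : (edgesBetween G X₁ X₂ : ℝ) < (d + ε') * ((X₁.card:ℝ) * X₂.card) := by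
    have hbb_aa : ((Y₁.card:ℝ) * Y₂.card) ≤ (X₁.card:ℝ) * X₂.card :=
      mul_le_mul hbX₁ hbX₂ hb₂.le ha₁.le
    have p1 : (d + ε) * ((Y₁.card:ℝ) * Y₂.card) ≤ (d + ε) * ((X₁.card:ℝ) * X₂.card) :=
      mul_le_mul_of_nonneg_left hbb_aa hdε.le
    have p2 : (d + 3 * ε) * ((X₁.card:ℝ) * X₂.card) ≤ (d + ε') * ((X₁.card:ℝ) * X₂.card) :=
      mul_le_mul_of_nonneg_right (by linarith) haa.le
    linarith
  have hlo' : d - ε' < density G X₁ X₂ := by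
    rw [density, lt_div_iff₀ haa]; exact hlo
  have hup' : density G X₁ X₂ < d + ε' := by
    rw [density, div_lt_iff₀ haa]; exact hup
  rw [abs_lt]
  constructor <;> linarith
end

section
/- Let r = ms + t with 1 ≤ t < s, let M be a positive integer divisible by r with M ≫ r, and let 0 < ε ≪ 1/r. Let S₁,…,Sₘ, T be disjoint finite sets with M = |S₁ ∪ … ∪ Sₘ ∪ T| and (s/r − ε)M ≤ |Sᵢ| ≤ (s/r)M for all i ∈ [m]. Define, for k ∈ [m], a Pₖ-move to remove s−1 elements from Sₖ, s elements from each Sᵢ with i ≠ k, and t+1 elements from T. Then by performing the moves Pₖ exactly xₖ = (s/r)M − |Sₖ| times for each k (all these being non-negative integers), one obtains subsets S₁' ⊆ S₁, …, Sₘ' ⊆ Sₘ, T' ⊆ T with |S₁'| = … = |Sₘ'| = (s/t)|T'| and |S₁' ∪ … ∪ Sₘ' ∪ T'| ≥ (1 − mrε)M. -/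
open Finset

private lemma aux1 (a b x c : ℕ) (h1 : c + x = a) (h2 : x ≤ b) (h3 : b ≤ a) :
    a - b = c - (b - x) := by omega

theorem stmt_6 {V : Type*} [DecidableEq V] (m s t r : ℕ)
    (hm : 1 ≤ m) (ht : 1 ≤ t) (hts : t < s) (hr : r = m * s + t)
    (S : Fin m → Finset V) (T : Finset V)
    (hdisjS : ∀ i j, i ≠ j → Disjoint (S i) (S j))
    (hdisjT : ∀ i, Disjoint (S i) T)
    (M : ℕ) (hM : M = (∑ i, (S i).card) + T.card)
    (hdvd : r ∣ M) (hMr : r ≤ M)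
    (ε : ℝ) (hε : 0 < ε) (hε' : ε < 1 / ((m : ℝ) * r * r))
    (hlow : ∀ i, ((s : ℝ) / r - ε) * M ≤ ((S i).card : ℝ))
    (hupp : ∀ i, (S i).card ≤ s * (M / r)) :
    ∃ (S' : Fin m → Finset V) (T' : Finset V),
      (∀ i, S' i ⊆ S i) ∧ T' ⊆ T ∧
      (∀ i, (S' i).card =
        (S i).card - (s * (∑ k, (s * (M / r) - (S k).card)) - (s * (M / r) - (S i).card))) ∧
      T'.card = T.card - (t + 1) * (∑ k, (s * (M / r) - (S k).card)) ∧
      (∀ i, t * (S' i).card = s * T'.card) ∧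
      (∀ i j, (S' i).card = (S' j).card) ∧
      (1 - (m : ℝ) * r * ε) * M ≤ ((∑ i, (S' i).card : ℕ) + (T'.card : ℕ) : ℝ) := by
  have hr1 : 1 ≤ r := by omega
  obtain ⟨q, hMq⟩ := hdvd
  have hq1 : 1 ≤ q := by nlinarith
  have hdivr : M / r = q := by rw [hMq]; exact Nat.mul_div_cancel_left q (by omega)
  have hcardle : ∀ i, (S i).card ≤ s * q := by intro i; have := hupp i; rwa [hdivr] at this
  set x : Fin m → ℕ := fun i => s * q - (S i).card with hxdef
  have hcx : ∀ i, (S i).card + x i = s * q := by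
    intro i; simp only [hxdef]; exact Nat.add_sub_cancel' (hcardle i)
  set X := ∑ k, x k with hXdef
  have hrR : (0:ℝ) < r := by exact_mod_cast hr1
  have hMR : (0:ℝ) < M := by
    have : 1 ≤ M := le_trans hr1 hMr; exact_mod_cast this
  have hxR : ∀ i, (x i : ℝ) ≤ ε * M := by
    intro i
    have h1 := hlow i
    have h2 : ((s:ℝ)/r) * M = (s:ℝ) * q := by
      rw [hMq]; push_cast; field_simp
    have h3 : (x i : ℝ) = (s:ℝ) * q - (S i).card := by
      have h := hcx i
      have : ((S i).card : ℝ) + (x i : ℝ) = (s:ℝ) * q := by exact_mod_cast h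
      linarith
    nlinarith [h1, h3]
  have hXR : (X : ℝ) ≤ (m : ℝ) * ε * M := by
    have h0 : (X : ℝ) = ∑ k, (x k : ℝ) := by rw [hXdef]; push_cast; rfl
    rw [h0]
    calc ∑ k, (x k : ℝ) ≤ ∑ _k : Fin m, ε * M := Finset.sum_le_sum (fun k _ => hxR k)
      _ = (m : ℝ) * ε * M := by
          simp [Finset.sum_const, nsmul_eq_mul]; ring
  have hmR : (0:ℝ) < m := by exact_mod_cast hm
  have hXltq : X < q := by
    have hqM : (q : ℝ) * r = M := by rw [hMq]; push_cast; ring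
    have h2 : (m:ℝ) * ε * M < (m:ℝ) * (1 / ((m : ℝ) * r * r)) * M :=
      mul_lt_mul_of_pos_right (mul_lt_mul_of_pos_left hε' hmR) hMR
    have h3 : (m:ℝ) * (1 / ((m : ℝ) * r * r)) * M = M / (r * r) := by
      field_simp
    have h4 : (M:ℝ) / (r * r) ≤ (q:ℝ) := by
      rw [div_le_iff₀ (by positivity)]
      have hq1R : (1:ℝ) ≤ (q:ℝ) := by exact_mod_cast hq1
      nlinarith [hqM, (by exact_mod_cast hr1 : (1:ℝ) ≤ (r:ℝ))]
    have h1 : (X : ℝ) < (q : ℝ) := by linarith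
    exact_mod_cast h1
  have hXle : X ≤ q := le_of_lt hXltq
  have hxleX : ∀ i, x i ≤ X := fun i =>
    Finset.single_le_sum (fun k _ => Nat.zero_le (x k)) (Finset.mem_univ i)
  have hsumcx : (∑ i, (S i).card) + X = m * (s * q) := by
    rw [hXdef, ← Finset.sum_add_distrib]
    simp only [hcx]
    rw [Finset.sum_const, Finset.card_univ, Fintype.card_fin, smul_eq_mul]
  have hTcard : T.card = t * q + X := by
    have hM' : M = r * q := hMq
    have he : r * q = m * (s * q) + t * q := by rw [hr]; ring
    omega
  -- construct the subsets
  have hS'ex : ∀ i, s * (q - X) ≤ (S i).card := by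
    intro i
    have h1 : s * (q - X) = s * q - s * X := Nat.mul_sub s q X
    have h2 : x i ≤ s * X := le_trans (hxleX i) (Nat.le_mul_of_pos_left X (by omega))
    have h3 := hcx i
    omega
  choose S' hS'sub hS'card using fun i => Finset.exists_subset_card_eq (hS'ex i)
  have hT'ex : t * (q - X) ≤ T.card := by
    have : t * (q - X) ≤ t * q := Nat.mul_le_mul_left t (Nat.sub_le q X)
    omega
  obtain ⟨T', hT'sub, hT'card⟩ := Finset.exists_subset_card_eq hT'ex
  -- rewrite the sum in the goal
  have hXeq : (∑ k, (s * (M / r) - (S k).card)) = X := by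
    rw [hXdef, hxdef]; simp only [hdivr]
  refine ⟨S', T', hS'sub, hT'sub, ?_, ?_, ?_, ?_, ?_⟩
  · intro i
    rw [hXeq, hS'card i, hdivr]
    have h1 : s * (q - X) = s * q - s * X := Nat.mul_sub s q X
    have h2 : x i ≤ s * X := le_trans (hxleX i) (Nat.le_mul_of_pos_left X (by omega))
    have h3 : s * X ≤ s * q := Nat.mul_le_mul_left s hXle
    rw [h1]
    exact aux1 (s * q) (s * X) (x i) (S i).card (hcx i) h2 h3
  · rw [hXeq, hT'card, hTcard]
    have h1 : t * (q - X) = t * q - t * X := Nat.mul_sub t q X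
    have h2 : t * X ≤ t * q := Nat.mul_le_mul_left t hXle
    have h3 : (t + 1) * X = t * X + X := by ring
    omega
  · intro i
    rw [hS'card i, hT'card]; ring
  · intro i j
    rw [hS'card i, hS'card j]
  · -- final inequality
    have hsum : (∑ i, (S' i).card) + T'.card = r * (q - X) := by
      have : ∑ i, (S' i).card = m * (s * (q - X)) := by
        simp only [hS'card]
        rw [Finset.sum_const, Finset.card_univ, Fintype.card_fin, smul_eq_mul]
      rw [this, hT'card, hr]; ring
    have hmerge : ((∑ i, (S' i).card : ℕ) : ℝ) + (T'.card : ℝ)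
        = ((((∑ i, (S' i).card) + T'.card : ℕ)) : ℝ) := by push_cast; ring
    rw [hmerge, hsum]
    have hcast : ((r * (q - X) : ℕ) : ℝ) = (r : ℝ) * ((q : ℝ) - (X : ℝ)) := by
      push_cast [Nat.cast_sub hXle]; ring
    rw [hcast]
    have hqM : (r : ℝ) * q = M := by rw [hMq]; push_cast; ring
    nlinarith [hXR, hrR]
end

section
/- Let r = (m+1)s and let U₁,…,U_{m+2} be disjoint finite sets with |Uᵢ| ≡ 0 (mod s) for each i, total size M ≡ 0 (mod r), M ≫ r, and |Uᵢ| = M/(m+2)·(1 ± ε) for all i, with 0 < ε ≪ 1. Then each Uᵢ can be partitioned into m+1 parts P_{i,1},…,P_{i,i−1},P_{i,i+1},…,P_{i,m+2} so that every part has size divisible by s and, for each j ∈ [m+2], all sizes |P_{i,j}| with i ≠ j are equal (namely equal to M/(m+1) − |Uⱼ|). -/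
open Finset

lemma exists_partition_of_sizes {V : Type*} [DecidableEq V] :
    ∀ (k : ℕ) (A : Finset V) (c : Fin k → ℕ), (∑ j, c j) = A.card →
    ∃ B : Fin k → Finset V, (∀ j, B j ⊆ A) ∧ (∀ j, (B j).card = c j) ∧
      (∀ j l, j ≠ l → Disjoint (B j) (B l)) ∧ Finset.univ.biUnion B = A := by
  intro k
  induction k with
  | zero =>
    intro A c hc
    refine ⟨fun j => ∅, fun j => j.elim0, fun j => j.elim0, fun j => j.elim0, ?_⟩
    simp at hc
    have : A = ∅ := Finset.card_eq_zero.mp hc.symm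
    simp [this]
  | succ k ih =>
    intro A c hc
    have h0 : c 0 ≤ A.card := by
      rw [← hc]
      exact Finset.single_le_sum (fun j _ => Nat.zero_le _) (Finset.mem_univ 0)
    obtain ⟨B0, hB0A, hB0card⟩ := Finset.exists_subset_card_eq h0
    have hA' : (∑ j : Fin k, c j.succ) = (A \ B0).card := by
      rw [Finset.card_sdiff_of_subset hB0A, hB0card, ← hc, Fin.sum_univ_succ]
      omega
    obtain ⟨B', hB'A, hB'card, hB'disj, hB'union⟩ := ih (A \ B0) (fun j => c j.succ) hA'
    refine ⟨Fin.cases B0 B', ?_, ?_, ?_, ?_⟩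
    · intro j
      refine Fin.cases ?_ ?_ j
      · exact hB0A
      · intro j'; exact (hB'A j').trans (Finset.sdiff_subset)
    · intro j
      refine Fin.cases ?_ ?_ j
      · exact hB0card
      · intro j'; exact hB'card j'
    · intro j l hjl
      induction j using Fin.cases with
      | zero =>
        induction l using Fin.cases with
        | zero => exact absurd rfl hjl
        | succ l' =>
          exact (Finset.disjoint_sdiff).mono_right (hB'A l')
      | succ j' =>
        induction l using Fin.cases with
        | zero => exact ((Finset.disjoint_sdiff).mono_right (hB'A j')).symm
        | succ l' =>
          refine hB'disj j' l' ?_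
          intro h
          exact hjl (by rw [h])
    · ext x
      simp only [Finset.mem_biUnion, Finset.mem_univ, true_and]
      constructor
      · rintro ⟨j, hj⟩
        refine Fin.cases (fun hj => hB0A hj) (fun j' hj => (Finset.sdiff_subset) (hB'A j' hj)) j hj
      · intro hx
        by_cases hxB : x ∈ B0
        · exact ⟨0, hxB⟩
        · have : x ∈ A \ B0 := Finset.mem_sdiff.mpr ⟨hx, hxB⟩
          rw [← hB'union] at this
          obtain ⟨j', _, hj'⟩ := Finset.mem_biUnion.mp this
          exact ⟨j'.succ, hj'⟩

theorem stmt_9 {V : Type*} [DecidableEq V] (m s r : ℕ) (hs : 1 ≤ s) (hr : r = (m + 1) * s)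
    (U : Fin (m + 2) → Finset V)
    (hdisj : ∀ i j, i ≠ j → Disjoint (U i) (U j))
    (M : ℕ) (hM : M = ∑ i, (U i).card)
    (hUs : ∀ i, s ∣ (U i).card) (hdvd : r ∣ M) (hMbig : r ^ 2 ≤ M)
    (ε : ℝ) (hε : 0 < ε) (hε1 : ε ≤ 1 / (2 * ((m : ℝ) + 1)))
    (hsize : ∀ i, |((U i).card : ℝ) - (M : ℝ) / (m + 2)| ≤ ε * ((M : ℝ) / (m + 2))) :
    ∃ P : Fin (m + 2) → Fin (m + 2) → Finset V,
      (∀ i, P i i = ∅) ∧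
      (∀ i j, P i j ⊆ U i) ∧
      (∀ i, ∀ j k, j ≠ k → Disjoint (P i j) (P i k)) ∧
      (∀ i, (Finset.univ.biUnion fun j => P i j) = U i) ∧
      (∀ i j, s ∣ (P i j).card) ∧
      (∀ j, ∀ i, i ≠ j → (P i j).card = M / (m + 1) - (U j).card) := by
  have hm1 : (0:ℕ) < m + 1 := Nat.succ_pos m
  have hm1dvd : (m + 1) ∣ M := by
    rw [hr] at hdvd; exact dvd_trans (Dvd.intro s rfl) hdvd
  set q : ℕ := M / (m + 1) with hq
  have hMq : M = (m + 1) * q := (Nat.mul_div_cancel' hm1dvd).symm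
  have hsq : s ∣ q := by
    obtain ⟨t, ht⟩ := hdvd
    rw [hr] at ht
    refine ⟨t, ?_⟩
    have hMt : M = (m + 1) * (s * t) := by rw [ht]; ring
    show M / (m + 1) = s * t
    rw [hMt, Nat.mul_div_cancel_left _ hm1]
  -- each |U j| ≤ q
  have hUle : ∀ j, (U j).card ≤ q := by
    intro j
    have hsz := hsize j
    have hD : (0:ℝ) ≤ (M : ℝ) / (m + 2) := by positivity
    have h1 : ((U j).card : ℝ) ≤ (1 + ε) * ((M : ℝ) / (m + 2)) := by
      have := abs_le.mp hsz
      nlinarith [this.2]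
    have hεm : ε * ((m:ℝ) + 1) ≤ 1 / 2 := by
      rw [le_div_iff₀ (by positivity : (0:ℝ) < 2 * ((m:ℝ) + 1))] at hε1
      nlinarith
    have hMD : ((m:ℝ) + 2) * ((M : ℝ) / (m + 2)) = (M : ℝ) := by
      field_simp
    have hmul : ((m:ℝ) + 1) * ((U j).card : ℝ) ≤ (M : ℝ) := by
      nlinarith [mul_le_mul_of_nonneg_left h1 (show (0:ℝ) ≤ (m:ℝ) + 1 by positivity),
        mul_le_mul_of_nonneg_right hεm hD]
    have hnat : (m + 1) * (U j).card ≤ M := by exact_mod_cast hmul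
    rw [hq, Nat.le_div_iff_mul_le hm1, mul_comm]
    exact hnat
  set c : Fin (m + 2) → Fin (m + 2) → ℕ := fun i j => if j = i then 0 else q - (U j).card with hc
  have hcsum : ∀ i, (∑ j, c i j) = (U i).card := by
    intro i
    have hsplit : (∑ j, c i j) = ∑ j ∈ Finset.univ.erase i, (q - (U j).card) := by
      rw [← Finset.sum_erase_add Finset.univ (c i) (Finset.mem_univ i)]
      have h0 : c i i = 0 := by simp [hc]
      rw [h0, add_zero]
      exact Finset.sum_congr rfl (fun j hj => by
        simp [hc, (Finset.mem_erase.mp hj).1])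
    have hcard : (Finset.univ.erase i).card = m + 1 := by
      rw [Finset.card_erase_of_mem (Finset.mem_univ i)]
      simp
    have hS : ∑ j ∈ Finset.univ.erase i, (q - (U j).card)
        + ∑ j ∈ Finset.univ.erase i, (U j).card = M := by
      rw [← Finset.sum_add_distrib]
      have h2 : ∑ j ∈ Finset.univ.erase i, ((q - (U j).card) + (U j).card)
          = ∑ j ∈ Finset.univ.erase i, q :=
        Finset.sum_congr rfl (fun j _ => by have := hUle j; omega)
      rw [h2, Finset.sum_const, hcard, smul_eq_mul, ← hMq]
    have hS2 : ∑ j ∈ Finset.univ.erase i, (U j).card + (U i).card = M := by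
      rw [hM]; exact Finset.sum_erase_add _ _ (Finset.mem_univ i)
    rw [hsplit]
    omega
  choose B hBsub hBcard hBdisj hBunion using
    fun i => exists_partition_of_sizes (m + 2) (U i) (c i) (hcsum i)
  refine ⟨B, ?_, hBsub, hBdisj, hBunion, ?_, ?_⟩
  · intro i
    have h := hBcard i i
    simp [hc] at h
    exact h
  · intro i j
    rw [hBcard i j]
    by_cases h : j = i
    · simp [hc, h]
    · simp only [hc, if_neg h]
      exact Nat.dvd_sub hsq (hUs j)
  · intro j i hij
    rw [hBcard i j]
    simp [hc, hij.symm]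
end

section
/- Let r, s, h, m, r' be positive integers with r = ms + t (1 ≤ t ≤ s), 0 < h < m, and r' = r − hs. Let G be an n-vertex graph with δ(G) ≥ (1 − s/r)n, let ñ = (r'/r)n, and let A be a set of vertices with ||A| − ñ| ≤ γ²n/9 for some γ > 0. Then the induced subgraph G[A] has minimum degree at least (1 − s/r')|A| − ||A| − ñ|. -/
open Finset

theorem stmt_10 {V : Type*} [Fintype V] [DecidableEq V] (G : SimpleGraph V) [DecidableRel G.Adj]
    (m s t r h r' : ℕ) (hm : 1 ≤ m) (ht : 1 ≤ t) (hts : t ≤ s)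
    (hr : r = m * s + t) (hh0 : 0 < h) (hhm : h < m) (hr' : r' = r - h * s)
    (n : ℕ) (hn : n = Fintype.card V)
    (hdeg : ∀ v : V, (1 - (s : ℝ) / r) * (n : ℝ) ≤ (G.degree v : ℝ))
    (γ : ℝ) (hγ : 0 < γ)
    (A : Finset V) (hA : |((A.card : ℝ)) - (r' : ℝ) / r * n| ≤ γ ^ 2 * n / 9) :
    ∀ v ∈ A, (1 - (s : ℝ) / r') * (A.card : ℝ) - |((A.card : ℝ)) - (r' : ℝ) / r * n| ≤
      ((A.filter fun u => G.Adj v u).card : ℝ) := by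
  intro v hv
  have hms : h * s ≤ m * s := Nat.mul_le_mul_right s hhm.le
  have hsub : (m - h) * s = m * s - h * s := Nat.sub_mul m h s
  have hr'eq : r' = (m - h) * s + t := by omega
  have hsle : s ≤ (m - h) * s := Nat.le_mul_of_pos_left s (by omega)
  have hsr' : s < r' := by omega
  have hrpos : 0 < r := by omega
  have hr'pos : 0 < r' := by omega
  -- counting bound
  have hAcard : A.card ≤ n := hn ▸ A.card_le_univ
  have hcount : G.degree v ≤ (A.filter fun u => G.Adj v u).card + (n - A.card) := by
    have hsubset : G.neighborFinset v ⊆ (A.filter fun u => G.Adj v u) ∪ Aᶜ := by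
      intro u hu
      rw [SimpleGraph.mem_neighborFinset] at hu
      by_cases hu' : u ∈ A
      · exact mem_union_left _ (mem_filter.mpr ⟨hu', hu⟩)
      · exact mem_union_right _ (mem_compl.mpr hu')
    calc G.degree v = (G.neighborFinset v).card := rfl
      _ ≤ ((A.filter fun u => G.Adj v u) ∪ Aᶜ).card := card_le_card hsubset
      _ ≤ (A.filter fun u => G.Adj v u).card + Aᶜ.card := card_union_le _ _
      _ = (A.filter fun u => G.Adj v u).card + (n - A.card) := by
          rw [card_compl, hn]
  have hcountR : (G.degree v : ℝ) ≤ ((A.filter fun u => G.Adj v u).card : ℝ) + ((n : ℝ) - A.card) := by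
    have := (Nat.cast_le (α := ℝ)).mpr hcount
    push_cast [Nat.cast_sub hAcard] at this
    linarith
  set a : ℝ := (A.card : ℝ) with ha
  set N : ℝ := (n : ℝ) with hN
  set d : ℝ := |a - (r' : ℝ) / r * N| with hd
  have hF : a - (s : ℝ) / r * N ≤ ((A.filter fun u => G.Adj v u).card : ℝ) := by
    have := hdeg v
    nlinarith [this, hcountR]
  have hrR : (0 : ℝ) < r := by exact_mod_cast hrpos
  have hr'R : (0 : ℝ) < r' := by exact_mod_cast hr'pos
  have hsr'R : (s : ℝ) / r' ≤ 1 := by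
    rw [div_le_one hr'R]; exact_mod_cast hsr'.le
  have hsr'0 : (0 : ℝ) ≤ (s : ℝ) / r' := by positivity
  have hd0 : 0 ≤ d := abs_nonneg _
  have hkey : (s : ℝ) / r * N - (s : ℝ) / r' * a ≤ d := by
    have heq : (s : ℝ) / r * N = (s : ℝ) / r' * ((r' : ℝ) / r * N) := by
      field_simp
    have h1 : (r' : ℝ) / r * N - a ≤ d := by
      rw [hd, abs_sub_comm]; exact le_abs_self _
    calc (s : ℝ) / r * N - (s : ℝ) / r' * a
        = (s : ℝ) / r' * ((r' : ℝ) / r * N - a) := by rw [heq]; ring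
      _ ≤ (s : ℝ) / r' * d := mul_le_mul_of_nonneg_left h1 hsr'0
      _ ≤ d := mul_le_of_le_one_left hd0 hsr'R
  linarith [hF, hkey]
end

section
/- Let r = ms + t with 0 ≤ t < s, h ∈ [m] with (t > 0 or h < m), and set x = s − t, y = (m−h)s + t, q₁ = x·r/(s(m−h+1)xy), q₂ = y·r/(s(m−h+1)xy). Then the weight-balance identities hold: q₁(m−h+1)(s/r) = 1/y, q₂(m−h+1)(s/r) = 1/x, and (q₁+q₂)(t/r + (m−h)(s/r)) = 1/x. Consequently, the weighted graph F on vertices l₁,…,l_h (weights 1/y), m₁,…,m_{m−h+1} and n₁,…,n_h (weights 1/x), with all edges present except lᵢnⱼ, admits a {q₁⋉T, q₂⋉T}-factor, where T is the weighted clique on σ₁,…,σₘ,τ with weights s/r,…,s/r,t/r and φ⋉T rescales all weights by φ. -/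
open Finset

/-- The vertex set of the auxiliary weighted graph `F`: `h` vertices `l₁,…,l_h`,
`m-h+1` vertices `m₁,…,m_{m-h+1}`, and `h` vertices `n₁,…,n_h`. -/
abbrev Fvert (m h : ℕ) := Fin h ⊕ (Fin (m - h + 1) ⊕ Fin h)

/-- Adjacency in `F`: all pairs of distinct vertices are edges except the pairs `lᵢnⱼ`. -/
def Fadj {m h : ℕ} (u v : Fvert m h) : Prop :=
  u ≠ v ∧ ¬ (∃ (i : Fin h) (j : Fin h),
    (u = Sum.inl i ∧ v = Sum.inr (Sum.inr j)) ∨ (v = Sum.inl i ∧ u = Sum.inr (Sum.inr j)))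

def Fembed (m h : ℕ) (hk : h + (m - h + 1) = m + 1) :
    Fin (m + 1) ≃ (Fin h ⊕ Fin (m - h + 1)) :=
  (finCongr hk.symm).trans finSumFinEquiv.symm

lemma Fembed_symm_inl_val (m h : ℕ) (hk : h + (m - h + 1) = m + 1) (i : Fin h) :
    (((Fembed m h hk).symm (Sum.inl i)) : ℕ) = i := by
  simp [Fembed]

lemma Fembed_symm_inr_val (m h : ℕ) (hk : h + (m - h + 1) = m + 1) (j : Fin (m - h + 1)) :
    (((Fembed m h hk).symm (Sum.inr j)) : ℕ) = h + j := by
  simp [Fembed]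

def psi (m h : ℕ) (hk : h + (m - h + 1) = m + 1) (j : Fin (m - h + 1)) :
    Fin (m + 1) ≃ (Fin h ⊕ Fin (m - h + 1)) :=
  (Equiv.swap (Fin.last m) ((Fembed m h hk).symm (Sum.inr j))).trans (Fembed m h hk)

lemma psi_symm (m h : ℕ) (hk : h + (m - h + 1) = m + 1) (j : Fin (m - h + 1))
    (u : Fin h ⊕ Fin (m - h + 1)) :
    (psi m h hk j).symm u =
      Equiv.swap (Fin.last m) ((Fembed m h hk).symm (Sum.inr j)) ((Fembed m h hk).symm u) := by
  simp [psi, Equiv.symm_trans_apply]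

lemma psi_symm_inl_ne_last (m h : ℕ) (hk : h + (m - h + 1) = m + 1)
    (j : Fin (m - h + 1)) (i : Fin h) :
    (psi m h hk j).symm (Sum.inl i) ≠ Fin.last m := by
  rw [psi_symm]
  have h1 : ((Fembed m h hk).symm (Sum.inl i) : ℕ) = i := Fembed_symm_inl_val m h hk i
  have h2 : ((Fembed m h hk).symm (Sum.inr j) : ℕ) = h + j := Fembed_symm_inr_val m h hk j
  have hih : (i : ℕ) < h := i.isLt
  have hne1 : (Fembed m h hk).symm (Sum.inl i) ≠ Fin.last m := by
    intro hEq
    have := congrArg (Fin.val) hEq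
    rw [h1, Fin.val_last] at this
    omega
  have hne2 : (Fembed m h hk).symm (Sum.inl i) ≠ (Fembed m h hk).symm (Sum.inr j) := by
    intro hEq
    have := congrArg (Fin.val) hEq
    rw [h1, h2] at this
    omega
  rw [Equiv.swap_apply_of_ne_of_ne hne1 hne2]
  exact hne1

lemma psi_symm_inr_eq_last_iff (m h : ℕ) (hk : h + (m - h + 1) = m + 1)
    (j b : Fin (m - h + 1)) :
    (psi m h hk j).symm (Sum.inr b) = Fin.last m ↔ b = j := by
  rw [psi_symm]
  constructor
  · intro hEq
    have := congrArg (Equiv.swap (Fin.last m) ((Fembed m h hk).symm (Sum.inr j))) hEq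
    rw [Equiv.swap_apply_self, Equiv.swap_apply_left] at this
    have := (Fembed m h hk).symm.injective this
    exact Sum.inr.injEq .. ▸ this
  · rintro rfl
    rw [Equiv.swap_apply_right]

/-- Embedding of the index set as `L ∪ M`. -/
def embA (m h : ℕ) : Fin h ⊕ Fin (m - h + 1) → Fvert m h := Sum.map id Sum.inl

/-- Embedding of the index set as `N ∪ M`. -/
def embB (m h : ℕ) : Fin h ⊕ Fin (m - h + 1) → Fvert m h :=
  Sum.elim (fun i => Sum.inr (Sum.inr i)) (fun j => Sum.inr (Sum.inl j))

lemma embA_injective (m h : ℕ) : Function.Injective (embA m h) :=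
  Function.Injective.sumMap Function.injective_id Sum.inl_injective

lemma embB_injective (m h : ℕ) : Function.Injective (embB m h) := by
  rintro (a | a) (b | b) hab <;> simp [embB] at hab <;> simp [hab]

lemma embA_ne_inr_inr (m h : ℕ) (u : Fin h ⊕ Fin (m - h + 1)) (j' : Fin h) :
    embA m h u ≠ Sum.inr (Sum.inr j') := by
  cases u <;> simp [embA]

lemma embB_ne_inl (m h : ℕ) (u : Fin h ⊕ Fin (m - h + 1)) (i' : Fin h) :
    embB m h u ≠ Sum.inl i' := by
  cases u <;> simp [embB]

theorem stmt_13 (m s t r h : ℕ) (hm : 1 ≤ m) (hts : t < s) (hr : r = m * s + t)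
    (hh1 : 1 ≤ h) (hhm : h ≤ m) (hcase : 0 < t ∨ h < m)
    (x y q₁ q₂ : ℝ) (hx : x = (s : ℝ) - t) (hy : y = ((m : ℝ) - h) * s + t)
    (hq₁ : q₁ = x * r / ((s : ℝ) * ((m : ℝ) - h + 1) * x * y))
    (hq₂ : q₂ = y * r / ((s : ℝ) * ((m : ℝ) - h + 1) * x * y)) :
    (q₁ * ((m : ℝ) - h + 1) * ((s : ℝ) / r) = 1 / y ∧
      q₂ * ((m : ℝ) - h + 1) * ((s : ℝ) / r) = 1 / x ∧
      (q₁ + q₂) * ((t : ℝ) / r + ((m : ℝ) - h) * ((s : ℝ) / r)) = 1 / x) ∧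
    ∃ (N : ℕ) (φ : Fin N → (Fin (m + 1) → Fvert m h)) (c : Fin N → ℝ),
      (∀ i, c i = q₁ ∨ c i = q₂) ∧
      (∀ i, Function.Injective (φ i)) ∧
      (∀ i, ∀ v v' : Fin (m + 1), v ≠ v' → Fadj (φ i v) (φ i v')) ∧
      (∀ z : Fvert m h,
        (∑ i, ∑ v : Fin (m + 1),
          if φ i v = z then
            c i * (if v = Fin.last m then (t : ℝ) / r else (s : ℝ) / r) else 0)
        = Sum.elim (fun _ => 1 / y) (fun _ => 1 / x) z) := by
  have hs : 0 < s := Nat.pos_of_ne_zero (by omega)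
  have hsR : (0:ℝ) < s := by exact_mod_cast hs
  have hrpos : 0 < r := by subst hr; nlinarith
  have hrR : (0:ℝ) < r := by exact_mod_cast hrpos
  have htsR : (t:ℝ) < s := by exact_mod_cast hts
  have hmh : (h:ℝ) ≤ m := by exact_mod_cast hhm
  have hxpos : 0 < x := by rw [hx]; linarith
  have hypos : 0 < y := by
    rw [hy]
    rcases hcase with ht | hlt
    · have h0 : (0:ℝ) < t := by exact_mod_cast ht
      nlinarith
    · have h1 : (h:ℝ) + 1 ≤ m := by exact_mod_cast hlt
      have h2 : (0:ℝ) ≤ t := Nat.cast_nonneg t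
      nlinarith
  have hk0 : (0:ℝ) < (m:ℝ) - h + 1 := by linarith
  have id1 : q₁ * ((m : ℝ) - h + 1) * ((s : ℝ) / r) = 1 / y := by
    rw [hq₁]; field_simp
  have id2 : q₂ * ((m : ℝ) - h + 1) * ((s : ℝ) / r) = 1 / x := by
    rw [hq₂]; field_simp
  have id3 : (q₁ + q₂) * ((t : ℝ) / r + ((m : ℝ) - h) * ((s : ℝ) / r)) = 1 / x := by
    rw [hq₁, hq₂, hx, hy]
    rw [hx] at hxpos; rw [hy] at hypos
    have hypos' : (s:ℝ) * ((m:ℝ) - h) + t ≠ 0 := by nlinarith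
    field_simp
    ring
  refine ⟨⟨id1, id2, id3⟩, ?_⟩
  have hk : h + (m - h + 1) = m + 1 := by omega
  have hkR : ((m - h + 1 : ℕ) : ℝ) = (m : ℝ) - h + 1 := by
    push_cast [Nat.cast_sub hhm]; ring
  refine ⟨(m - h + 1) + (m - h + 1),
    fun i => Sum.elim (fun j => embA m h ∘ (psi m h hk j)) (fun j => embB m h ∘ (psi m h hk j))
      (finSumFinEquiv.symm i),
    fun i => Sum.elim (fun _ => q₁) (fun _ => q₂) (finSumFinEquiv.symm i),
    ?_, ?_, ?_, ?_⟩
  · intro i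
    rcases hI : finSumFinEquiv.symm i with j | j <;> simp [hI]
  · intro i
    rcases hI : finSumFinEquiv.symm i with j | j <;> simp only [hI] <;>
      simp only [Sum.elim_inl, Sum.elim_inr]
    · exact (embA_injective m h).comp (psi m h hk j).injective
    · exact (embB_injective m h).comp (psi m h hk j).injective
  · intro i v v' hvv'
    rcases hI : finSumFinEquiv.symm i with j | j <;> simp only [hI] <;>
      simp only [Sum.elim_inl, Sum.elim_inr, Function.comp_apply]
    · refine ⟨fun hEq => hvv' ((psi m h hk j).injective (embA_injective m h hEq)), ?_⟩
      rintro ⟨i', j', (⟨h1, h2⟩ | ⟨h1, h2⟩)⟩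
      · exact embA_ne_inr_inr m h _ j' h2
      · exact embA_ne_inr_inr m h _ j' h2
    · refine ⟨fun hEq => hvv' ((psi m h hk j).injective (embB_injective m h hEq)), ?_⟩
      rintro ⟨i', j', (⟨h1, h2⟩ | ⟨h1, h2⟩)⟩
      · exact embB_ne_inl m h _ i' h1
      · exact embB_ne_inl m h _ i' h1
  · intro z
    rw [← Equiv.sum_comp (finSumFinEquiv :
        Fin (m - h + 1) ⊕ Fin (m - h + 1) ≃ Fin ((m - h + 1) + (m - h + 1)))]
    simp only [Equiv.symm_apply_apply]
    rw [Fintype.sum_sum_type]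
    have reidx : ∀ (j : Fin (m - h + 1)) (emb : Fin h ⊕ Fin (m - h + 1) → Fvert m h) (cc : ℝ),
        (∑ v : Fin (m + 1), if emb (psi m h hk j v) = z then
            cc * (if v = Fin.last m then (t : ℝ) / r else (s : ℝ) / r) else 0)
        = (∑ a : Fin h, if emb (Sum.inl a) = z then
            cc * (if (psi m h hk j).symm (Sum.inl a) = Fin.last m then (t : ℝ) / r else (s : ℝ) / r) else 0)
          + (∑ b : Fin (m - h + 1), if emb (Sum.inr b) = z then
            cc * (if (psi m h hk j).symm (Sum.inr b) = Fin.last m then (t : ℝ) / r else (s : ℝ) / r) else 0) := by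
      intro j emb cc
      rw [← Equiv.sum_comp (psi m h hk j).symm (fun v => if emb (psi m h hk j v) = z then
            cc * (if v = Fin.last m then (t : ℝ) / r else (s : ℝ) / r) else 0)]
      simp only [Equiv.apply_symm_apply]
      rw [Fintype.sum_sum_type]
    have wl : ∀ (j : Fin (m - h + 1)) (a : Fin h),
        (if (psi m h hk j).symm (Sum.inl a) = Fin.last m then (t : ℝ) / r else (s : ℝ) / r)
          = (s : ℝ) / r := by
      intro j a
      rw [if_neg (psi_symm_inl_ne_last m h hk j a)]
    have wr : ∀ (j b : Fin (m - h + 1)),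
        (if (psi m h hk j).symm (Sum.inr b) = Fin.last m then (t : ℝ) / r else (s : ℝ) / r)
          = (if b = j then (t : ℝ) / r else (s : ℝ) / r) := by
      intro j b
      by_cases hbj : b = j
      · rw [if_pos ((psi_symm_inr_eq_last_iff m h hk j b).mpr hbj), if_pos hbj]
      · rw [if_neg (fun hc => hbj ((psi_symm_inr_eq_last_iff m h hk j b).mp hc)), if_neg hbj]
    dsimp +instances only [Sum.elim_inl, Sum.elim_inr, Function.comp_apply]
    simp only [reidx]
    rcases z with i0 | (b0 | i0)
    · -- L vertex
      simp only [reidx, wl, wr, embA, embB, Sum.map_inl, Sum.map_inr, Sum.elim_inl,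
        Sum.elim_inr, id_eq, Sum.inl.injEq, Sum.inr.injEq, reduceCtorEq, if_false,
        Finset.sum_const_zero, add_zero, zero_add, Finset.sum_ite_eq', Finset.mem_univ,
        if_true, Finset.sum_const, Finset.card_univ, Fintype.card_fin, nsmul_eq_mul]
      rw [hkR]
      linear_combination id1
    · -- M vertex
      simp only [reidx, wl, wr, embA, embB, Sum.map_inl, Sum.map_inr, Sum.elim_inl,
        Sum.elim_inr, id_eq, Sum.inl.injEq, Sum.inr.injEq, reduceCtorEq, if_false,
        Finset.sum_const_zero, add_zero, zero_add, Finset.sum_ite_eq', Finset.mem_univ,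
        if_true]
      have key : ∀ cc : ℝ, (∑ j : Fin (m - h + 1), cc * (if b0 = j then (t : ℝ) / r else (s : ℝ) / r))
          = ((m - h + 1 : ℕ) : ℝ) * (cc * ((s : ℝ) / r)) + (cc * ((t : ℝ) / r) - cc * ((s : ℝ) / r)) := by
        intro cc
        rw [Finset.sum_congr rfl (fun j _ => show
            cc * (if b0 = j then (t : ℝ) / r else (s : ℝ) / r)
              = cc * ((s : ℝ) / r) + (if b0 = j then cc * ((t : ℝ) / r) - cc * ((s : ℝ) / r) else 0) by
          by_cases hbj : b0 = j <;> simp [hbj] <;> ring)]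
        rw [Finset.sum_add_distrib, Finset.sum_const, Finset.sum_ite_eq, Finset.card_univ,
          Fintype.card_fin, nsmul_eq_mul]
        simp
      rw [key, key, hkR]
      linear_combination id3
    · -- N vertex
      simp only [reidx, wl, wr, embA, embB, Sum.map_inl, Sum.map_inr, Sum.elim_inl,
        Sum.elim_inr, id_eq, Sum.inl.injEq, Sum.inr.injEq, reduceCtorEq, if_false,
        Finset.sum_const_zero, add_zero, zero_add, Finset.sum_ite_eq', Finset.mem_univ,
        if_true, Finset.sum_const, Finset.card_univ, Fintype.card_fin, nsmul_eq_mul]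
      rw [hkR]
      linear_combination id2
end

section
/- Let H be a graph with chromatic number m+1, let t be the smallest possible size of a colour class in a proper (m+1)-colouring of H, let r = |V(H)| and s = (r − t)/m, so that the critical chromatic number is χ_cr(H) = r/s. Let B(m,r,t) be the complete (m+1)-partite graph with m classes of size ms and one class of size mt. Then B(m,r,t) has an H-factor, i.e., the vertex set of B(m,r,t) can be partitioned into vertex-disjoint copies of H. -/
open Finset

/-- The relation generating the bottle graph `B(m,r,t)`: the complete `(m+1)`-partite
graph with `m` classes of size `m*s` and one class of size `m*t`. -/
def bottleRel (m s t : ℕ) :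
    ((Fin m × Fin (m * s)) ⊕ Fin (m * t)) → ((Fin m × Fin (m * s)) ⊕ Fin (m * t)) → Prop
  | Sum.inl p, Sum.inl q => p.1 ≠ q.1
  | Sum.inl _, Sum.inr _ => True
  | Sum.inr _, Sum.inl _ => True
  | Sum.inr _, Sum.inr _ => False

/-- The bottle graph `B(m,r,t)`. -/
def bottleGraph (m s t : ℕ) : SimpleGraph ((Fin m × Fin (m * s)) ⊕ Fin (m * t)) :=
  SimpleGraph.fromRel (bottleRel m s t)

theorem stmt_19 {α : Type*} [Fintype α] [DecidableEq α] (H : SimpleGraph α)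
    (m s t r : ℕ) (hm : 1 ≤ m) (ht : 1 ≤ t)
    (hrcard : Fintype.card α = r) (hr : r = m * s + t)
    (hchrom : H.chromaticNumber = ((m + 1 : ℕ) : ℕ∞))
    (hmin : ∃ C : H.Coloring (Fin (m + 1)), ∃ i,
      (Finset.univ.filter fun v => C v = i).card = t)
    (hminall : ∀ C : H.Coloring (Fin (m + 1)), ∀ i,
      t ≤ (Finset.univ.filter fun v => C v = i).card) :
    ∃ f : Fin m → (α ↪ ((Fin m × Fin (m * s)) ⊕ Fin (m * t))),
      (∀ k, ∀ a b : α, H.Adj a b → (bottleGraph m s t).Adj (f k a) (f k b)) ∧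
      ∀ y : (Fin m × Fin (m * s)) ⊕ Fin (m * t), ∃! p : Fin m × α, f p.1 p.2 = y := by
  have hmz : NeZero m := ⟨by omega⟩
  obtain ⟨C, i₀, hS⟩ := hmin
  -- cardinalities of the small class and its complement
  have hcardS : Fintype.card {v : α // C v = i₀} = t := by
    rw [Fintype.card_subtype]; exact hS
  have hcardB : Fintype.card {v : α // ¬ (C v = i₀)} = m * s := by
    have := Fintype.card_subtype_compl (fun v : α => C v = i₀)
    rw [this, hcardS, hrcard, hr]; omega
  obtain ⟨eS⟩ := Fintype.card_eq.mp (hcardS.trans (Fintype.card_fin t).symm)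
  obtain ⟨eB⟩ := Fintype.card_eq.mp (hcardB.trans (Fintype.card_fin (m * s)).symm)
  set π : {i : Fin (m + 1) // i ≠ i₀} → Fin m := ⇑(finSuccAboveEquiv i₀).symm with hπ
  -- the global map
  set F : Fin m × α → ((Fin m × Fin (m * s)) ⊕ Fin (m * t)) := fun p =>
    if h : C p.2 = i₀ then Sum.inr (finProdFinEquiv (p.1, eS ⟨p.2, h⟩))
    else Sum.inl (π ⟨C p.2, h⟩ + p.1, eB ⟨p.2, h⟩) with hF
  have hFinj : Function.Injective F := by
    rintro ⟨k₁, v₁⟩ ⟨k₂, v₂⟩ h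
    simp only [hF] at h
    by_cases h1 : C v₁ = i₀ <;> by_cases h2 : C v₂ = i₀
    · rw [dif_pos h1, dif_pos h2] at h
      rw [Sum.inr.injEq] at h
      have := finProdFinEquiv.injective h
      rw [Prod.mk.injEq] at this
      obtain ⟨hk, hv⟩ := this
      have := eS.injective hv
      exact Prod.ext hk (by simpa using congrArg Subtype.val this)
    · rw [dif_pos h1, dif_neg h2] at h
      exact absurd h (by simp)
    · rw [dif_neg h1, dif_pos h2] at h
      exact absurd h (by simp)
    · rw [dif_neg h1, dif_neg h2] at h
      simp only [Sum.inl.injEq, Prod.mk.injEq] at h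
      have hv' : v₁ = v₂ := congrArg Subtype.val (eB.injective h.2)
      subst hv'
      exact Prod.ext (add_left_cancel h.1) rfl
  have hFbij : Function.Bijective F := by
    refine (Fintype.bijective_iff_injective_and_card F).mpr ⟨hFinj, ?_⟩
    simp [Fintype.card_prod, hrcard, hr]
    ring
  refine ⟨fun k => ⟨fun v => F (k, v), fun a b h => by
      have := hFinj h; simpa using congrArg Prod.snd this⟩, ?_, ?_⟩
  · intro k a b hab
    have hC : C a ≠ C b := C.valid hab
    have hne : a ≠ b := hab.ne
    simp only [Function.Embedding.coeFn_mk, hF]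
    by_cases ha : C a = i₀ <;> by_cases hb : C b = i₀
    · exact absurd (ha.trans hb.symm) hC
    · rw [dif_pos ha, dif_neg hb]
      exact ⟨by simp, Or.inl trivial⟩
    · rw [dif_neg ha, dif_pos hb]
      exact ⟨by simp, Or.inl trivial⟩
    · rw [dif_neg ha, dif_neg hb]
      have hππ : π ⟨C a, ha⟩ ≠ π ⟨C b, hb⟩ := by
        intro h
        exact hC (by simpa using congrArg Subtype.val ((finSuccAboveEquiv i₀).symm.injective h))
      have hpart : π ⟨C a, ha⟩ + k ≠ π ⟨C b, hb⟩ + k := fun h => hππ (add_right_cancel h)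
      exact ⟨by simp [hpart], Or.inl hpart⟩
  · intro y
    obtain ⟨p, hp⟩ := hFbij.surjective y
    refine ⟨p, hp, ?_⟩
    rintro ⟨k, v⟩ hq
    exact hFinj (hq.trans hp.symm) ▸ rfl
end
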